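/- arXiv:2209.12996 — 2 statements merged into one kernel-verified Lean document; each statement's English description precedes it below -/
import Mathlib

section
/- Let Γ be the graph product of a family of groups {Γ_v} over a finite simple graph 𝒢, and let 𝒮, 𝒯 be induced subgraphs with associated full subgroups Γ_𝒮 and Γ_𝒯. If g ∈ Γ satisfies g Γ_𝒯 g⁻¹ ⊆ Γ_𝒮, then there exists h ∈ Γ_𝒮 such that g Γ_𝒯 g⁻¹ = h Γ_{𝒯∩𝒮} h⁻¹. In particular, if 𝒮 = 𝒯 and g Γ_𝒮 g⁻¹ ⊆ Γ_𝒮, then g Γ_𝒮 g⁻¹ = Γ_𝒮. -/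
/-! The full subgroup `Γ_𝒮` is a retract of `Γ`: the retraction `π_𝒮` kills every vertex group
outside `𝒮`. Applying `π_𝒮` to `g Γ_𝒯 g⁻¹ ≤ Γ_𝒮`, on which it is the identity, gives
`g Γ_𝒯 g⁻¹ = π_𝒮(g) π_𝒮(Γ_𝒯) π_𝒮(g)⁻¹ = h Γ_{𝒯∩𝒮} h⁻¹` with `h = π_𝒮(g) ∈ Γ_𝒮`. -/

open Monoid

variable {V : Type*}

/-- Defining relators of a graph product: commutators of elements of adjacent vertex groups. -/
def graphProdRels (G : SimpleGraph V) (Γ : V → Type*) [∀ v, Group (Γ v)] :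
    Set (Monoid.CoprodI Γ) :=
  {x | ∃ (u w : V) (a : Γ u) (b : Γ w), G.Adj u w ∧
      x = CoprodI.of a * CoprodI.of b * (CoprodI.of a)⁻¹ * (CoprodI.of b)⁻¹}

/-- The graph product of the family of groups `Γ` over the simple graph `G`. -/
def GraphProduct (G : SimpleGraph V) (Γ : V → Type*) [∀ v, Group (Γ v)] : Type _ :=
  CoprodI Γ ⧸ Subgroup.normalClosure (graphProdRels G Γ)

instance (G : SimpleGraph V) (Γ : V → Type*) [∀ v, Group (Γ v)] :
    Group (GraphProduct G Γ) :=
  inferInstanceAs (Group (CoprodI Γ ⧸ Subgroup.normalClosure (graphProdRels G Γ)))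

/-- The canonical map from a vertex group into the graph product. -/
def GraphProduct.of {G : SimpleGraph V} {Γ : V → Type*} [∀ v, Group (Γ v)] (v : V) :
    Γ v →* GraphProduct G Γ :=
  (QuotientGroup.mk' (Subgroup.normalClosure (graphProdRels G Γ))).comp CoprodI.of

/-- The full subgroup of a graph product associated with a set of vertices. -/
def GraphProduct.full (G : SimpleGraph V) (Γ : V → Type*) [∀ v, Group (Γ v)]
    (U : Set V) : Subgroup (GraphProduct G Γ) :=
  Subgroup.closure (⋃ u ∈ U, Set.range (GraphProduct.of (G := G) (Γ := Γ) u))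

/-- The conjugate subgroup `g H g⁻¹`. -/
def conjSub {G : Type*} [Group G] (g : G) (H : Subgroup G) : Subgroup G :=
  Subgroup.map (MulAut.conj g).toMonoidHom H

/-- The common link of a set of vertices. -/
def lkSet (G : SimpleGraph V) (S : Set V) : Set V :=
  ⋂ u ∈ S, G.neighborSet u

section conjSub

variable {H K : Type*} [Group H] [Group K]

lemma mem_conjSub {g x : H} {L : Subgroup H} : x ∈ conjSub g L ↔ ∃ y ∈ L, g * y * g⁻¹ = x := by
  simp [conjSub, MulAut.conj_apply]

lemma conjSub_eq_self_of_mem {h : H} {L : Subgroup H} (hh : h ∈ L) : conjSub h L = L := by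
  ext x
  rw [mem_conjSub]
  constructor
  · rintro ⟨y, hy, rfl⟩
    exact mul_mem (mul_mem hh hy) (inv_mem hh)
  · intro hx
    exact ⟨h⁻¹ * x * h, mul_mem (mul_mem (inv_mem hh) hx) hh, by group⟩

lemma map_conjSub (f : H →* K) (g : H) (L : Subgroup H) :
    (conjSub g L).map f = conjSub (f g) (L.map f) := by
  ext x
  simp only [Subgroup.mem_map, mem_conjSub]
  constructor
  · rintro ⟨_, ⟨y, hy, rfl⟩, rfl⟩
    exact ⟨f y, ⟨y, hy, rfl⟩, by simp⟩
  · rintro ⟨_, ⟨y, hy, rfl⟩, rfl⟩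
    exact ⟨g * y * g⁻¹, ⟨y, hy, rfl⟩, by simp⟩

end conjSub

lemma Subgroup.map_eq_self_of_eqOn {H : Type*} [Group H] {f : H →* H} {L : Subgroup H}
    (hf : Set.EqOn f id L) : L.map f = L := by
  ext x
  constructor
  · rintro ⟨y, hy, rfl⟩
    rwa [hf hy]
  · exact fun hx => ⟨x, hx, hf hx⟩

namespace GraphProduct

variable {G : SimpleGraph V} {Γ : V → Type*} [∀ v, Group (Γ v)]

lemma of_commute {u w : V} (huw : G.Adj u w) (a : Γ u) (b : Γ w) :
    Commute (of (G := G) u a) (of w b) := by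
  have hrel : (QuotientGroup.mk (CoprodI.of a * CoprodI.of b * (CoprodI.of a)⁻¹ *
      (CoprodI.of b)⁻¹) : GraphProduct G Γ) = 1 :=
    (QuotientGroup.eq_one_iff _).mpr (Subgroup.subset_normalClosure ⟨u, w, a, b, huw, rfl⟩)
  simp only [QuotientGroup.mk_mul, QuotientGroup.mk_inv] at hrel
  exact commutatorElement_eq_one_iff_commute.mp hrel

def lift {H : Type*} [Group H] (f : ∀ v, Γ v →* H)
    (hf : ∀ u w, G.Adj u w → ∀ (a : Γ u) (b : Γ w), Commute (f u a) (f w b)) :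
    GraphProduct G Γ →* H :=
  QuotientGroup.lift _ (CoprodI.lift f) <| by
    refine Subgroup.normalClosure_le_normal ?_
    rintro _ ⟨u, w, a, b, huw, rfl⟩
    simpa [commutatorElement_def] using commutatorElement_eq_one_iff_commute.mpr (hf u w huw a b)

lemma lift_of {H : Type*} [Group H] (f : ∀ v, Γ v →* H)
    (hf : ∀ u w, G.Adj u w → ∀ (a : Γ u) (b : Γ w), Commute (f u a) (f w b)) {v : V} (a : Γ v) :
    lift (G := G) f hf (of v a) = f v a :=
  CoprodI.lift_of f a

open Classical in
noncomputable def proj (S : Set V) : GraphProduct G Γ →* GraphProduct G Γ :=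
  lift (fun v => if v ∈ S then of v else 1) fun u w huw a b => by
    split_ifs
    exacts [of_commute huw a b, Commute.one_right _, Commute.one_left _, Commute.one_left _]

open Classical in
lemma proj_of (S : Set V) {v : V} (a : Γ v) :
    proj (G := G) S (of v a) = if v ∈ S then of v a else 1 := by
  rw [proj, lift_of]
  split_ifs <;> rfl

lemma of_mem_full {U : Set V} {v : V} (hv : v ∈ U) (a : Γ v) : of v a ∈ full G Γ U :=
  Subgroup.subset_closure (Set.mem_biUnion hv ⟨a, rfl⟩)

lemma full_univ : full G Γ Set.univ = ⊤ := by
  refine (Subgroup.eq_top_iff' _).mpr fun x => ?_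
  induction x using QuotientGroup.induction_on with
  | H y =>
    induction y using CoprodI.induction_on with
    | one => exact one_mem _
    | of v a => exact of_mem_full (Set.mem_univ v) a
    | mul x y hx hy => exact mul_mem hx hy

lemma map_proj_full (S T : Set V) : (full G Γ T).map (proj S) = full G Γ (T ∩ S) := by
  rw [full, MonoidHom.map_closure]
  apply le_antisymm
  · rw [Subgroup.closure_le]
    rintro _ ⟨_, ⟨_, ⟨v, rfl⟩, _, ⟨hv, rfl⟩, a, rfl⟩, rfl⟩
    rw [proj_of]
    split_ifs with hvS
    exacts [of_mem_full (Set.mem_inter hv hvS) a, one_mem _]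
  · refine Subgroup.closure_mono ?_
    rintro _ ⟨_, ⟨v, rfl⟩, _, ⟨⟨hvT, hvS⟩, rfl⟩, a, rfl⟩
    refine ⟨of v a, Set.mem_biUnion hvT ⟨a, rfl⟩, ?_⟩
    rw [proj_of, if_pos hvS]

lemma proj_mem_full (S : Set V) (x : GraphProduct G Γ) : proj S x ∈ full G Γ S := by
  have hx : proj S x ∈ (full G Γ Set.univ).map (proj S) :=
    Subgroup.mem_map_of_mem _ (full_univ (G := G) (Γ := Γ) ▸ Subgroup.mem_top x)
  rwa [map_proj_full, Set.univ_inter] at hx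

lemma eqOn_proj_full (S : Set V) :
    Set.EqOn (proj (G := G) (Γ := Γ) S) id (full G Γ S) := by
  refine MonoidHom.eqOn_closure (g := MonoidHom.id _) ?_
  rintro _ ⟨_, ⟨v, rfl⟩, _, ⟨hv, rfl⟩, a, rfl⟩
  rw [proj_of, if_pos hv]
  rfl

lemma map_proj_of_le_full {S : Set V} {L : Subgroup (GraphProduct G Γ)} (hL : L ≤ full G Γ S) :
    L.map (proj S) = L :=
  Subgroup.map_eq_self_of_eqOn ((eqOn_proj_full S).mono hL)

end GraphProduct

open GraphProduct in
theorem stmt_0_general {V : Type*} (G : SimpleGraph V) (Γ : V → Type*)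
    [∀ v, Group (Γ v)] (S T : Set V) (g : GraphProduct G Γ)
    (hsub : conjSub g (GraphProduct.full G Γ T) ≤ GraphProduct.full G Γ S) :
    (∃ h ∈ GraphProduct.full G Γ S,
        conjSub g (GraphProduct.full G Γ T) = conjSub h (GraphProduct.full G Γ (T ∩ S))) ∧
      (S = T → conjSub g (GraphProduct.full G Γ T) = GraphProduct.full G Γ S) := by
  have key : conjSub g (full G Γ T) = conjSub (proj S g) (full G Γ (T ∩ S)) :=
    calc conjSub g (full G Γ T)
        = (conjSub g (full G Γ T)).map (proj S) := (map_proj_of_le_full hsub).symm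
      _ = conjSub (proj S g) (full G Γ (T ∩ S)) := by rw [map_conjSub, map_proj_full]
  refine ⟨⟨proj S g, proj_mem_full S g, key⟩, ?_⟩
  rintro rfl
  rw [key, Set.inter_self, conjSub_eq_self_of_mem (proj_mem_full S g)]

/-- If `g Γ_𝒯 g⁻¹ ⊆ Γ_𝒮` then `g Γ_𝒯 g⁻¹ = h Γ_{𝒯∩𝒮} h⁻¹` for some `h ∈ Γ_𝒮`;
in particular, if `𝒮 = 𝒯` then `g Γ_𝒯 g⁻¹ = Γ_𝒮`. -/
theorem stmt_0 {V : Type*} [Fintype V] (G : SimpleGraph V) (Γ : V → Type*)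
    [∀ v, Group (Γ v)] (S T : Set V) (g : GraphProduct G Γ)
    (hsub : conjSub g (GraphProduct.full G Γ T) ≤ GraphProduct.full G Γ S) :
    (∃ h ∈ GraphProduct.full G Γ S,
        conjSub g (GraphProduct.full G Γ T) = conjSub h (GraphProduct.full G Γ (T ∩ S))) ∧
      (S = T → conjSub g (GraphProduct.full G Γ T) = GraphProduct.full G Γ S) :=
  stmt_0_general G Γ S T g hsub
end

section
/- Let W be a wreath-like product group in 𝒲ℛ(A, B ↷ I), i.e., W fits in an extension 1 → ⊕_{i∈I} Aᵢ → W →^ε B → 1 with each Aᵢ ≅ A and w Aᵢ w⁻¹ = A_{ε(w)i} for all w ∈ W, i ∈ I. If A is nontrivial and abelian, B is icc, and the action B ↷ I has infinite orbits, then W is an icc group. -/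
/-!
An element `g` outside `ker ε` has infinitely many conjugates because its image in the icc
group `B` does. An element `g ≠ 1` of `ker ε = ⨆ i, A' i` has a finite support, the set of `i`
with `g ∉ ⨆ j ≠ i, A' j`; independence of the summands makes it nonempty. Conjugating by `w`
moves the support by `σ (ε w)`, so finitely many conjugates of `g` could not reach the infinite
orbit of a point of the support.
-/

/-- A group is icc if every nontrivial conjugacy class is infinite. -/
def IsICC (G : Type*) [Group G] : Prop :=
  ∀ g : G, g ≠ 1 → {x : G | ∃ h : G, h * g * h⁻¹ = x}.Infinite

open Pointwise in
theorem Subgroup.mem_right_of_mem_sup_of_inf_eq_bot {G : Type*} [Group G] {H K L : Subgroup G}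
    (hKH : K ≤ normalizer (H : Set G)) (hKL : K ≤ L) (hHL : H ⊓ L = ⊥) {g : G}
    (hg : g ∈ H ⊔ K) (hgL : g ∈ L) : g ∈ K := by
  obtain ⟨a, ha, k, hk, rfl⟩ : g ∈ (H : Set G) * (K : Set G) := by
    rwa [← coe_mul_of_right_le_normalizer_left H K hKH]
  have haL : a ∈ L := by simpa using mul_mem hgL (inv_mem (hKL hk))
  have ha1 : a = 1 := by
    rw [← mem_bot, ← hHL]
    exact ⟨ha, haL⟩
  simpa [ha1] using hk

theorem infinite_conj_of_surjective {G H : Type*} [Group G] [Group H] {f : G →* H}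
    (hf : Function.Surjective f) {g : G}
    (h : {y : H | ∃ k : H, k * f g * k⁻¹ = y}.Infinite) :
    {x : G | ∃ k : G, k * g * k⁻¹ = x}.Infinite := by
  refine Set.Infinite.of_image f (h.mono ?_)
  rintro _ ⟨k, rfl⟩
  obtain ⟨k, rfl⟩ := hf k
  exact ⟨k * g * k⁻¹, ⟨k, rfl⟩, by simp⟩

namespace Subgroup

variable {G I : Type*} [Group G] (A : I → Subgroup G)

def iSupCompl (i : I) : Subgroup G := ⨆ j ∈ ({i}ᶜ : Set I), A j

-- For `g` in the direct sum `⨆ i, A i`, the indices of its nontrivial coordinates.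
def sumSupport (g : G) : Set I := {i | g ∉ iSupCompl A i}

variable {A}

theorem iSup_finset_le_iSupCompl {s : Finset I} {i : I} (hi : i ∉ s) :
    ⨆ j ∈ s, A j ≤ iSupCompl A i :=
  iSup₂_le fun j hj => le_iSup₂ (f := fun j (_ : j ∈ ({i}ᶜ : Set I)) => A j) j
    (by rintro rfl; exact hi hj)

theorem exists_finset_of_mem_iSup {g : G} (hg : g ∈ ⨆ i, A i) :
    ∃ s : Finset I, g ∈ ⨆ i ∈ s, A i := by
  rw [iSup_eq_iSup_finset] at hg
  refine (mem_iSup_of_directed ?_).1 hg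
  exact Monotone.directed_le fun s t hst => biSup_mono fun _ hi => Finset.mem_of_subset hst hi

theorem sumSupport_subset {s : Finset I} {g : G} (hg : g ∈ ⨆ i ∈ s, A i) :
    sumSupport A g ⊆ s := fun i hgi => by
  by_contra hi
  exact hgi (iSup_finset_le_iSupCompl hi hg)

theorem sumSupport_finite {g : G} (hg : g ∈ ⨆ i, A i) : (sumSupport A g).Finite := by
  obtain ⟨s, hs⟩ := exists_finset_of_mem_iSup hg
  exact s.finite_toSet.subset (sumSupport_subset hs)

theorem eq_one_of_sumSupport_eq_empty
    (hcomm : ∀ i j : I, i ≠ j → ∀ x ∈ A i, ∀ y ∈ A j, x * y = y * x)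
    (hindep : ∀ i : I, A i ⊓ iSupCompl A i = ⊥) {g : G} (hg : g ∈ ⨆ i, A i)
    (hsupp : sumSupport A g = ∅) : g = 1 := by
  classical
  obtain ⟨s, hs⟩ := exists_finset_of_mem_iSup hg
  have hgcompl : ∀ i, g ∈ iSupCompl A i := fun i => by
    by_contra h
    exact (Set.eq_empty_iff_forall_notMem.1 hsupp) i h
  induction s using Finset.induction_on with
  | empty => simpa using hs
  | insert i t hit ih =>
    refine ih (mem_right_of_mem_sup_of_inf_eq_bot ?_ (iSup_finset_le_iSupCompl hit) (hindep i)
      (by rwa [Finset.iSup_insert] at hs) (hgcompl i))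
    refine le_trans (iSup₂_le fun j hj => ?_) (centralizer_le_normalizer _)
    intro y hy
    rw [mem_centralizer_iff]
    exact fun x hx => hcomm i j (by rintro rfl; exact hit hj) x hx y hy

section Conj

variable {π : G →* Equiv.Perm I}
  (hconj : ∀ (w : G) (i : I), (A i).map (MulAut.conj w).toMonoidHom = A (π w i))
include hconj

theorem map_conj_iSupCompl_le (w : G) (i : I) :
    (iSupCompl A i).map (MulAut.conj w).toMonoidHom ≤ iSupCompl A (π w i) := by
  simp only [iSupCompl, map_iSup, hconj]
  exact iSup₂_le fun j hj => le_iSup₂ (f := fun j (_ : j ∈ ({π w i}ᶜ : Set I)) => A j) (π w j)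
    fun h => hj ((π w).injective h)

theorem conj_mem_iSup {g : G} (hg : g ∈ ⨆ i, A i) (w : G) : w * g * w⁻¹ ∈ ⨆ i, A i := by
  have : (⨆ i, A i).map (MulAut.conj w).toMonoidHom ≤ ⨆ i, A i := by
    simp only [map_iSup, hconj]
    exact iSup_le fun i => le_iSup A (π w i)
  exact this ⟨g, hg, rfl⟩

theorem mem_sumSupport_conj {g : G} {i : I} (hi : i ∈ sumSupport A g) (w : G) :
    π w i ∈ sumSupport A (w * g * w⁻¹) := by
  intro hconj_mem
  apply hi
  have := map_conj_iSupCompl_le hconj w⁻¹ (π w i) ⟨_, hconj_mem, rfl⟩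
  simpa [mul_assoc] using this

theorem infinite_conj_of_mem_iSup
    (hcomm : ∀ i j : I, i ≠ j → ∀ x ∈ A i, ∀ y ∈ A j, x * y = y * x)
    (hindep : ∀ i : I, A i ⊓ iSupCompl A i = ⊥)
    (horb : ∀ i : I, (Set.range fun w : G => π w i).Infinite)
    {g : G} (hg : g ∈ ⨆ i, A i) (hg1 : g ≠ 1) :
    {x : G | ∃ h : G, h * g * h⁻¹ = x}.Infinite := by
  obtain ⟨i, hi⟩ := Set.nonempty_iff_ne_empty.2
    fun h => hg1 (eq_one_of_sumSupport_eq_empty hcomm hindep hg h)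
  intro hfin
  refine horb i (Set.Finite.subset (hfin.biUnion (t := sumSupport A) fun x hx => ?_) ?_)
  · obtain ⟨w, rfl⟩ := hx
    exact sumSupport_finite (conj_mem_iSup hconj hg w)
  · rintro _ ⟨w, rfl⟩
    exact Set.mem_biUnion ⟨w, rfl⟩ (mem_sumSupport_conj hconj hi w)

end Conj

end Subgroup

theorem stmt_17_general {W B : Type*} [Group W] [Group B]
    {I : Type*} (ε : W →* B) (hsurj : Function.Surjective ε)
    (σ : B →* Equiv.Perm I) (A' : I → Subgroup W)
    (hcomm : ∀ i j : I, i ≠ j → ∀ x ∈ A' i, ∀ y ∈ A' j, x * y = y * x)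
    (hindep : ∀ i : I, A' i ⊓ (⨆ j ∈ ({i}ᶜ : Set I), A' j) = ⊥)
    (hker : (⨆ i, A' i) = ε.ker)
    (hconj : ∀ (w : W) (i : I),
      (A' i).map (MulAut.conj w).toMonoidHom = A' (σ (ε w) i))
    (hBicc : IsICC B)
    (horb : ∀ i : I, (Set.range fun b : B => σ b i).Infinite) :
    IsICC W := by
  intro g hg
  by_cases hεg : ε g = 1
  · have horbW : ∀ i, (Set.range fun w : W => σ (ε w) i).Infinite := fun i => by
      simpa only [← hsurj.range_comp, Function.comp_def] using horb i
    exact Subgroup.infinite_conj_of_mem_iSup (π := σ.comp ε) hconj hcomm hindep horbW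
      (hker ▸ hεg) hg
  · exact infinite_conj_of_surjective hsurj (hBicc (ε g) hεg)

/-- A wreath-like product of a nontrivial abelian group `A` and an icc group `B` acting
on `I` with infinite orbits is icc.  The wreath-like structure on `W` is encoded by a
surjection `ε : W → B`, an action `σ` of `B` on `I`, and a family of subgroups
`A' i ≅ A` which pairwise commute, are independent, generate `ker ε`, and are permuted
by conjugation according to `σ ∘ ε`. -/
theorem stmt_17 {W B A : Type*} [Group W] [Group B] [CommGroup A] [Nontrivial A]
    {I : Type*} (ε : W →* B) (hsurj : Function.Surjective ε)
    (σ : B →* Equiv.Perm I) (A' : I → Subgroup W)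
    (hiso : ∀ i, Nonempty (A' i ≃* A))
    (hcomm : ∀ i j : I, i ≠ j → ∀ x ∈ A' i, ∀ y ∈ A' j, x * y = y * x)
    (hindep : ∀ i : I, A' i ⊓ (⨆ j ∈ ({i}ᶜ : Set I), A' j) = ⊥)
    (hker : (⨆ i, A' i) = ε.ker)
    (hconj : ∀ (w : W) (i : I),
      (A' i).map (MulAut.conj w).toMonoidHom = A' (σ (ε w) i))
    (hBicc : IsICC B)
    (horb : ∀ i : I, (Set.range fun b : B => σ b i).Infinite) :
    IsICC W :=
  stmt_17_general ε hsurj σ A' hcomm hindep hker hconj hBicc horb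
end
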